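/- Let M be a descriptive σ-model based on a weakly transitive frame and ρ ⊆ σ. Then for every cluster C in M there exists a ρ-maximal cluster C' such that C R^r C' and {t^ρ(x) | x ∈ C} ⊆ {t^ρ(y) | y ∈ C'}. -/

import Mathlib

/-- Modal formulas built from propositional variables (indexed by ℕ),
constants ⊤, ⊥, negation, conjunction and the modal operator ◇. -/
inductive MF : Type where
  | var : ℕ → MF
  | top : MF
  | bot : MF
  | neg : MF → MF
  | and : MF → MF → MF
  | dia : MF → MF
deriving DecidableEq

namespace MF

/-- Disjunction, as an abbreviation. -/
def or (a b : MF) : MF := neg (and (neg a) (neg b))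

/-- Implication, as an abbreviation. -/
def imp (a b : MF) : MF := MF.or (neg a) b

/-- Box, as an abbreviation: □φ := ¬◇¬φ. -/
def box (a : MF) : MF := neg (dia (neg a))

/-- The (finite) set of propositional variables occurring in a formula. -/
def sig : MF → Finset ℕ
  | var n => {n}
  | top => ∅
  | bot => ∅
  | neg a => a.sig
  | and a b => a.sig ∪ b.sig
  | dia a => a.sig

/-- The set of subformulas of a formula. -/
def subf : MF → Finset MF
  | var n => {var n}
  | top => {top}
  | bot => {bot}
  | neg a => insert (neg a) (subf a)
  | and a b => insert (and a b) (subf a ∪ subf b)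
  | dia a => insert (dia a) (subf a)

/-- The number of subformulas of a formula. -/
def nsub (a : MF) : ℕ := (subf a).card

end MF

/-- A Kripke model: a binary (accessibility) relation on worlds together with
a valuation assigning to each propositional variable a set of worlds. -/
structure KModel (W : Type) where
  R : W → W → Prop
  val : ℕ → W → Prop

/-- Weak transitivity: xRy and yRz imply x = z or xRz. -/
def WTrans {W : Type} (R : W → W → Prop) : Prop :=
  ∀ x y z : W, R x y → R y z → x = z ∨ R x z

/-- The usual Kripke truth relation. -/
def Sat {W : Type} (M : KModel W) : W → MF → Prop
  | x, .var n => M.val n x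
  | _, .top => True
  | _, .bot => False
  | x, .neg a => ¬ Sat M x a
  | x, .and a b => Sat M x a ∧ Sat M x b
  | x, .dia a => ∃ y, M.R x y ∧ Sat M y a

/-- wK4-validity: truth at every point of every model based on a weakly
transitive frame. -/
def WK4Valid (φ : MF) : Prop :=
  ∀ (W : Type) (M : KModel W), WTrans M.R → ∀ x : W, Sat M x φ

/-- The cluster of a point x: C(x) = {x} ∪ {y | xRy and yRx}. -/
def cluster {W : Type} (R : W → W → Prop) (x : W) : Set W :=
  {x} ∪ {y | R x y ∧ R y x}

/-- C R C' for sets of points: xRy for some x ∈ C, y ∈ C'. -/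
def clusterRel {W : Type} (R : W → W → Prop) (C C' : Set W) : Prop :=
  ∃ x ∈ C, ∃ y ∈ C', R x y

/-- C R y for a set C and point y: xRy for some x ∈ C. -/
def clusterRelPt {W : Type} (R : W → W → Prop) (C : Set W) (y : W) : Prop :=
  ∃ x ∈ C, R x y

/-- C R^s C': C R C' and C ≠ C'. -/
def clusterRelS {W : Type} (R : W → W → Prop) (C C' : Set W) : Prop :=
  clusterRel R C C' ∧ C ≠ C'

/-- A set is a cluster if it is the cluster of some point. -/
def IsCluster {W : Type} (R : W → W → Prop) (C : Set W) : Prop :=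
  ∃ x : W, C = cluster R x

/-- A σ-model is descriptive if it satisfies (dif), (ref) and (com). -/
def Descriptive {W : Type} (σ : Finset ℕ) (M : KModel W) : Prop :=
  (∀ x y : W, (∀ φ : MF, φ.sig ⊆ σ → (Sat M x φ ↔ Sat M y φ)) → x = y) ∧
  (∀ x y : W, M.R x y ↔ ∀ χ : MF, χ.sig ⊆ σ → Sat M y χ → Sat M x (MF.dia χ)) ∧
  (∀ Γ : Set MF, (∀ φ ∈ Γ, φ.sig ⊆ σ) →
    (∀ Γ' : Finset MF, ↑Γ' ⊆ Γ → ∃ x : W, ∀ φ ∈ Γ', Sat M x φ) →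
    ∃ x : W, ∀ φ ∈ Γ, Sat M x φ)

/-- The ρ-type of a point: the set of all ρ-formulas true at it. -/
def rType {W : Type} (M : KModel W) (ρ : Finset ℕ) (x : W) : Set MF :=
  {φ : MF | φ.sig ⊆ ρ ∧ Sat M x φ}

/-- A cluster C is ρ-maximal if whenever C R y and some x ∈ C has the same
ρ-type as y, then y ∈ C. -/
def RhoMaximal {W : Type} (M : KModel W) (ρ : Finset ℕ) (C : Set W) : Prop :=
  ∀ x ∈ C, ∀ y : W, clusterRelPt M.R C y → rType M ρ x = rType M ρ y → y ∈ C

/-- β is a ρ-bisimulation between M1 and M2: conditions (atom) and (move). -/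
def IsBisim {W1 W2 : Type} (ρ : Finset ℕ) (M1 : KModel W1) (M2 : KModel W2)
    (β : W1 → W2 → Prop) : Prop :=
  ∀ x1 x2, β x1 x2 →
    (∀ n ∈ ρ, M1.val n x1 ↔ M2.val n x2) ∧
    (∀ y1, M1.R x1 y1 → ∃ y2, M2.R x2 y2 ∧ β y1 y2) ∧
    (∀ y2, M2.R x2 y2 → ∃ y1, M1.R x1 y1 ∧ β y1 y2)

/-- M1,x1 ∼ρ M2,x2 : some ρ-bisimulation relates x1 to x2. -/
def Bisimilar {W1 W2 : Type} (ρ : Finset ℕ) (M1 : KModel W1) (x1 : W1)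
    (M2 : KModel W2) (x2 : W2) : Prop :=
  ∃ β : W1 → W2 → Prop, IsBisim ρ M1 M2 β ∧ β x1 x2

/-! Let `Φ` be the set of formulas `φ ∨ ◇φ` with `φ` in the ρ-type of some point of `C(x)`. By
weak transitivity `Φ` holds on all of `C(x)`, and whenever it holds at a point it holds on that
point's cluster. Zorn's lemma, with chains bounded by compactness (com) and (ref), gives an
`R`-maximal point `m` above `x` satisfying `Φ`; its cluster is the `C'` sought. A point seen from
`C(m)` with the ρ-type of a point of `C(m)` satisfies `Φ`, so it lies in `C(m)` by maximality. For
`u ∈ C(x)`, `m` satisfies `γ ∨ ◇γ` for every finite conjunction `γ` of `t^ρ(u)`, so `t^ρ(u)` is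
realized at `m` or, by compactness, at a successor of `m`, which again lies in `C(m)`. -/

open Relation

theorem IsChain.exists_forall_rel_of_finset {α : Type*} {r : α → α → Prop} [IsPreorder α r]
    {c : Set α} (hc : IsChain r c) (hne : c.Nonempty) (s : Finset α) (hs : ↑s ⊆ c) :
    ∃ b ∈ c, ∀ a ∈ s, r a b := by
  classical
  induction s using Finset.induction_on with
  | empty => exact ⟨hne.some, hne.some_mem, by simp⟩
  | insert a s _ ih =>
    rw [Finset.coe_insert, Set.insert_subset_iff] at hs
    obtain ⟨b, hb, hsb⟩ := ih hs.2
    rcases hc.total hs.1 hb with hab | hba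
    · exact ⟨b, hb, Finset.forall_mem_insert .. |>.2 ⟨hab, hsb⟩⟩
    · exact ⟨a, hs.1, Finset.forall_mem_insert .. |>.2
        ⟨refl a, fun a' ha' => _root_.trans (hsb a' ha') hba⟩⟩

section Semantics

variable {W : Type} {M : KModel W}

@[simp] lemma sat_neg {x : W} {φ : MF} : Sat M x φ.neg ↔ ¬ Sat M x φ := Iff.rfl

@[simp] lemma sat_and {x : W} {φ ψ : MF} : Sat M x (φ.and ψ) ↔ Sat M x φ ∧ Sat M x ψ := Iff.rfl

@[simp] lemma sat_or {x : W} {φ ψ : MF} : Sat M x (φ.or ψ) ↔ Sat M x φ ∨ Sat M x ψ := by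
  simp only [MF.or, sat_neg, sat_and]
  tauto

lemma MF.sig_or (φ ψ : MF) : (φ.or ψ).sig = φ.sig ∪ ψ.sig := rfl

lemma rType_eq_of_forall_sat {ρ : Finset ℕ} {u z : W} (h : ∀ φ ∈ rType M ρ u, Sat M z φ) :
    rType M ρ z = rType M ρ u := by
  ext φ
  refine ⟨fun ⟨hφρ, hzφ⟩ => ⟨hφρ, ?_⟩, fun hφ => ⟨hφ.1, h φ hφ⟩⟩
  by_contra huφ
  exact h φ.neg ⟨hφρ, huφ⟩ hzφ

lemma sat_of_rType_eq {ρ : Finset ℕ} {v y : W} {φ : MF} (h : rType M ρ v = rType M ρ y)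
    (hφ : φ.sig ⊆ ρ) (hv : Sat M v φ) : Sat M y φ :=
  (h ▸ ⟨hφ, hv⟩ : φ ∈ rType M ρ y).2

lemma exists_conj_mem_rType {ρ : Finset ℕ} {u : W} (Γ : Finset MF) (hΓ : ↑Γ ⊆ rType M ρ u) :
    ∃ γ ∈ rType M ρ u, ∀ y, Sat M y γ → ∀ φ ∈ Γ, Sat M y φ := by
  classical
  induction Γ using Finset.induction_on with
  | empty => exact ⟨.top, ⟨by simp [MF.sig], trivial⟩, by simp⟩
  | insert φ Γ _ ih =>
    rw [Finset.coe_insert, Set.insert_subset_iff] at hΓ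
    obtain ⟨γ, ⟨hγρ, huγ⟩, hγ⟩ := ih hΓ.2
    refine ⟨φ.and γ, ⟨Finset.union_subset hΓ.1.1 hγρ, hΓ.1.2, huγ⟩, fun y ⟨hyφ, hyγ⟩ => ?_⟩
    exact Finset.forall_mem_insert .. |>.2 ⟨hyφ, hγ y hyγ⟩

end Semantics

section Clusters

variable {W : Type} {R : W → W → Prop}

lemma mem_cluster_self (R : W → W → Prop) (x : W) : x ∈ cluster R x := Or.inl rfl

lemma reflTransGen_of_mem_cluster {x u : W} (hu : u ∈ cluster R x) : ReflTransGen R x u := by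
  rcases hu with rfl | ⟨hxu, -⟩
  exacts [.refl, .single hxu]

lemma WTrans.eq_or_rel_of_reflTransGen (hw : WTrans R) {x y : W} (h : ReflTransGen R x y) :
    x = y ∨ R x y := by
  induction h with
  | refl => exact Or.inl rfl
  | tail _ hyz ih =>
    rcases ih with rfl | hxy
    exacts [Or.inr hyz, hw _ _ _ hxy hyz]

lemma WTrans.rel_of_mem_cluster (hw : WTrans R) {x u v : W} (hu : u ∈ cluster R x)
    (hv : v ∈ cluster R x) (huv : u ≠ v) : R u v := by
  rcases hu with rfl | ⟨-, hux⟩ <;> rcases hv with rfl | ⟨hxv, -⟩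
  · exact absurd rfl huv
  · exact hxv
  · exact hux
  · exact (hw _ _ _ hux hxv).resolve_left huv

lemma WTrans.cluster_eq_or_clusterRelS (hw : WTrans R) {x y : W} (h : ReflTransGen R x y) :
    cluster R x = cluster R y ∨ clusterRelS R (cluster R x) (cluster R y) := by
  rcases hw.eq_or_rel_of_reflTransGen h with rfl | hxy
  · exact Or.inl rfl
  · by_cases hC : cluster R x = cluster R y
    · exact Or.inl hC
    · exact Or.inr ⟨⟨x, mem_cluster_self R x, y, mem_cluster_self R y, hxy⟩, hC⟩

end Clusters

section OrDia

variable {W : Type} {M : KModel W}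

lemma WTrans.sat_or_dia_of_mem_cluster (hw : WTrans M.R) {x u v : W} {φ : MF}
    (hu : u ∈ cluster M.R x) (hv : v ∈ cluster M.R x) (h : Sat M u φ ∨ Sat M u φ.dia) :
    Sat M v φ ∨ Sat M v φ.dia := by
  obtain rfl | huv := eq_or_ne u v
  · exact h
  have hvu := hw.rel_of_mem_cluster hv hu huv.symm
  rcases h with huφ | ⟨s, hus, hsφ⟩
  · exact Or.inr ⟨u, hvu, huφ⟩
  · rcases hw _ _ _ hvu hus with rfl | hvs
    exacts [Or.inl hsφ, Or.inr ⟨s, hvs, hsφ⟩]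

def orDiaOfTypes (M : KModel W) (ρ : Finset ℕ) (C : Set W) : Set MF :=
  {ψ | ∃ u ∈ C, ∃ φ ∈ rType M ρ u, ψ = φ.or φ.dia}

variable {ρ : Finset ℕ}

lemma sig_subset_of_mem_orDiaOfTypes {C : Set W} {ψ : MF} (hψ : ψ ∈ orDiaOfTypes M ρ C) :
    ψ.sig ⊆ ρ := by
  obtain ⟨u, -, φ, ⟨hφρ, -⟩, rfl⟩ := hψ
  simpa [MF.sig_or, MF.sig] using hφρ

lemma WTrans.sat_orDiaOfTypes (hw : WTrans M.R) {x v : W} (hv : v ∈ cluster M.R x) :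
    ∀ ψ ∈ orDiaOfTypes M ρ (cluster M.R x), Sat M v ψ := by
  rintro _ ⟨u, hu, φ, ⟨-, huφ⟩, rfl⟩
  exact sat_or.2 (hw.sat_or_dia_of_mem_cluster hu hv (Or.inl huφ))

lemma WTrans.sat_orDiaOfTypes_of_mem_cluster (hw : WTrans M.R) {C : Set W} {m v : W}
    (hm : ∀ ψ ∈ orDiaOfTypes M ρ C, Sat M m ψ) (hv : v ∈ cluster M.R m) :
    ∀ ψ ∈ orDiaOfTypes M ρ C, Sat M v ψ := by
  rintro _ hψ
  obtain ⟨u, hu, φ, hφ, rfl⟩ := hψ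
  exact sat_or.2 (hw.sat_or_dia_of_mem_cluster (mem_cluster_self _ m) hv
    (sat_or.1 (hm _ ⟨u, hu, φ, hφ, rfl⟩)))

lemma sat_orDiaOfTypes_of_rType_eq {C : Set W} {v y : W} (h : rType M ρ v = rType M ρ y)
    (hv : ∀ ψ ∈ orDiaOfTypes M ρ C, Sat M v ψ) : ∀ ψ ∈ orDiaOfTypes M ρ C, Sat M y ψ :=
  fun ψ hψ => sat_of_rType_eq h (sig_subset_of_mem_orDiaOfTypes hψ) (hv ψ hψ)

end OrDia

namespace Descriptive

variable {W : Type} {σ : Finset ℕ} {M : KModel W}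

/-- The formulas `¬χ` with `a ⊭ ◇χ` for some `a ∈ S` force, by (ref), every point satisfying
them to be a common successor of `S`. -/
theorem exists_common_succ (hd : Descriptive σ M) {S : Set W} {Δ : Set MF}
    (hΔ : ∀ φ ∈ Δ, φ.sig ⊆ σ)
    (h : ∀ (S' : Finset W) (Γ : Finset MF), ↑S' ⊆ S → ↑Γ ⊆ Δ →
      ∃ y, (∀ a ∈ S', M.R a y) ∧ ∀ φ ∈ Γ, Sat M y φ) :
    ∃ z, (∀ a ∈ S, M.R a z) ∧ ∀ φ ∈ Δ, Sat M z φ := by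
  classical
  set N : Set MF := {φ | ∃ χ : MF, φ = χ.neg ∧ χ.sig ⊆ σ ∧ ∃ a ∈ S, ¬ Sat M a χ.dia}
  have hN : ∀ Γ : Finset MF, ↑Γ ⊆ Δ ∪ N → ∃ y, ∀ φ ∈ Γ, Sat M y φ := by
    intro Γ hΓ
    have hwit : ∀ φ : Γ.filter (· ∉ Δ), ∃ a ∈ S, ∃ χ : MF, φ.1 = χ.neg ∧ ¬ Sat M a χ.dia := by
      rintro ⟨φ, hφ⟩
      rw [Finset.mem_filter] at hφ
      obtain ⟨χ, hφχ, -, a, ha, haχ⟩ := (hΓ hφ.1).resolve_left hφ.2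
      exact ⟨a, ha, χ, hφχ, haχ⟩
    choose f hfS hf using hwit
    obtain ⟨y, hy, hyΓ⟩ := h (Finset.univ.image f) (Γ.filter (· ∈ Δ))
      (by simpa [Set.range_subset_iff] using hfS) (by simp [Set.subset_def])
    refine ⟨y, fun φ hφ => ?_⟩
    by_cases hφΔ : φ ∈ Δ
    · exact hyΓ φ (Finset.mem_filter.2 ⟨hφ, hφΔ⟩)
    · let φ' : Γ.filter (· ∉ Δ) := ⟨φ, Finset.mem_filter.2 ⟨hφ, hφΔ⟩⟩
      obtain ⟨χ, hφχ, haχ⟩ := hf φ'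
      rw [show φ = χ.neg from hφχ, sat_neg]
      exact fun hyχ => haχ ⟨y, hy _ (Finset.mem_image_of_mem f (Finset.mem_univ φ')), hyχ⟩
  obtain ⟨z, hz⟩ := hd.2.2 (Δ ∪ N)
    (by rintro φ (hφ | ⟨χ, rfl, hχ, -⟩); exacts [hΔ φ hφ, hχ]) hN
  refine ⟨z, fun a ha => (hd.2.1 a z).2 fun χ hχ hzχ => ?_, fun φ hφ => hz φ (Or.inl hφ)⟩
  by_contra haχ
  exact hz χ.neg (Or.inr ⟨χ, rfl, hχ, a, ha, haχ⟩) hzχ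

theorem exists_rel_sat (hd : Descriptive σ M) {m : W} {Δ : Set MF} (hΔ : ∀ φ ∈ Δ, φ.sig ⊆ σ)
    (h : ∀ Γ : Finset MF, ↑Γ ⊆ Δ → ∃ y, M.R m y ∧ ∀ φ ∈ Γ, Sat M y φ) :
    ∃ z, M.R m z ∧ ∀ φ ∈ Δ, Sat M z φ := by
  obtain ⟨z, hmz, hz⟩ := hd.exists_common_succ (S := {m}) hΔ fun S' Γ hS' hΓ => by
    obtain ⟨y, hmy, hy⟩ := h Γ hΓ
    exact ⟨y, fun a ha => (hS' ha : a = m) ▸ hmy, hy⟩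
  exact ⟨z, hmz m rfl, hz⟩

theorem exists_rType_eq_of_sat_or_dia (hd : Descriptive σ M) {ρ : Finset ℕ} (hρσ : ρ ⊆ σ)
    {m u : W} (h : ∀ φ ∈ rType M ρ u, Sat M m φ ∨ Sat M m φ.dia) :
    ∃ u', (u' = m ∨ M.R m u') ∧ rType M ρ u' = rType M ρ u := by
  by_cases hm : ∀ φ ∈ rType M ρ u, Sat M m φ
  · exact ⟨m, Or.inl rfl, rType_eq_of_forall_sat hm⟩
  push Not at hm
  obtain ⟨φ₀, hφ₀, hmφ₀⟩ := hm
  obtain ⟨z, hmz, hz⟩ := hd.exists_rel_sat (Δ := rType M ρ u) (fun φ hφ => hφ.1.trans hρσ) fun Γ hΓ => by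
    obtain ⟨γ, hγ, hγΓ⟩ := exists_conj_mem_rType (insert φ₀ Γ)
      (by rw [Finset.coe_insert, Set.insert_subset_iff]; exact ⟨hφ₀, hΓ⟩)
    rcases h γ hγ with hmγ | ⟨y, hmy, hyγ⟩
    · exact absurd (hγΓ m hmγ φ₀ (Finset.mem_insert_self ..)) hmφ₀
    · exact ⟨y, hmy, fun φ hφ => hγΓ y hyγ φ (Finset.mem_insert_of_mem hφ)⟩
  exact ⟨z, Or.inr hmz, rType_eq_of_forall_sat hz⟩

theorem exists_upper_bound_of_isChain (hd : Descriptive σ M) (hw : WTrans M.R) {Γ : Set MF}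
    (hΓ : ∀ φ ∈ Γ, φ.sig ⊆ σ) {c : Set W} (hc : IsChain (ReflTransGen M.R) c) (hne : c.Nonempty)
    (hcΓ : ∀ a ∈ c, ∀ φ ∈ Γ, Sat M a φ) :
    ∃ z, (∀ φ ∈ Γ, Sat M z φ) ∧ ∀ a ∈ c, ReflTransGen M.R a z := by
  by_cases htop : ∃ b ∈ c, ∀ a ∈ c, ReflTransGen M.R a b
  · obtain ⟨b, hb, hcb⟩ := htop
    exact ⟨b, hcΓ b hb, hcb⟩
  push Not at htop
  obtain ⟨z, hcz, hzΓ⟩ := hd.exists_common_succ (S := c) hΓ fun S' Γ' hS' hΓ' => by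
    obtain ⟨b, hb, hS'b⟩ := hc.exists_forall_rel_of_finset hne S' hS'
    obtain ⟨p, hp, hpb⟩ := htop b hb
    have hbp := (hc.total hb hp).resolve_right hpb
    refine ⟨p, fun a ha => ?_, fun φ hφ => hcΓ p hp φ (hΓ' hφ)⟩
    refine (hw.eq_or_rel_of_reflTransGen ((hS'b a ha).trans hbp)).resolve_left ?_
    rintro rfl
    exact hpb (hS'b a ha)
  exact ⟨z, hzΓ, fun a ha => .single (hcz a ha)⟩

theorem exists_maximal_sat (hd : Descriptive σ M) (hw : WTrans M.R) {Γ : Set MF}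
    (hΓ : ∀ φ ∈ Γ, φ.sig ⊆ σ) {x : W} (hx : ∀ φ ∈ Γ, Sat M x φ) :
    ∃ m, ReflTransGen M.R x m ∧ (∀ φ ∈ Γ, Sat M m φ) ∧
      ∀ z, M.R m z → (∀ φ ∈ Γ, Sat M z φ) → z ∈ cluster M.R m := by
  let P : Set W := {z | ReflTransGen M.R x z ∧ ∀ φ ∈ Γ, Sat M z φ}
  obtain ⟨⟨m, hxm, hmΓ⟩, hmax⟩ := exists_maximal_of_chains_bounded
    (r := fun a b : P => ReflTransGen M.R a.1 b.1) (fun c hc => by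
      rcases c.eq_empty_or_nonempty with rfl | ⟨a₀, ha₀⟩
      · exact ⟨⟨x, .refl, hx⟩, by simp⟩
      obtain ⟨z, hzΓ, hcz⟩ := hd.exists_upper_bound_of_isChain hw hΓ
        (hc.image_of_map_rel _ _ Subtype.val fun _ _ h => h) ⟨a₀.1, a₀, ha₀, rfl⟩
        (by rintro _ ⟨a, -, rfl⟩; exact a.2.2)
      exact ⟨⟨z, a₀.2.1.trans (hcz _ ⟨a₀, ha₀, rfl⟩), hzΓ⟩, fun a ha => hcz _ ⟨a, ha, rfl⟩⟩)
    (fun h₁ h₂ => h₁.trans h₂)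
  refine ⟨m, hxm, hmΓ, fun z hmz hzΓ => ?_⟩
  have hzm : ReflTransGen M.R z m := hmax ⟨z, hxm.tail hmz, hzΓ⟩ (.single hmz)
  rcases hw.eq_or_rel_of_reflTransGen hzm with rfl | hzm
  exacts [mem_cluster_self _ z, Or.inr ⟨hmz, hzm⟩]

end Descriptive

/-- In a descriptive σ-model on a weakly transitive frame, every cluster C
has a ρ-maximal cluster C' with C R^r C' and t^ρ(C) ⊆ t^ρ(C'). -/
theorem stmt11 {W : Type} (σ ρ : Finset ℕ) (hρσ : ρ ⊆ σ) (M : KModel W)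
    (hw : WTrans M.R) (hd : Descriptive σ M) (x : W) :
    ∃ y : W,
      RhoMaximal M ρ (cluster M.R y) ∧
      (cluster M.R x = cluster M.R y ∨
        clusterRelS M.R (cluster M.R x) (cluster M.R y)) ∧
      rType M ρ '' cluster M.R x ⊆ rType M ρ '' cluster M.R y := by
  obtain ⟨m, hxm, hmΦ, hmax⟩ := hd.exists_maximal_sat hw
    (fun ψ hψ => (sig_subset_of_mem_orDiaOfTypes hψ).trans hρσ)
    (hw.sat_orDiaOfTypes (ρ := ρ) (mem_cluster_self M.R x))
  refine ⟨m, ?_, hw.cluster_eq_or_clusterRelS hxm, ?_⟩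
  · rintro v hv y ⟨u, hu, huy⟩ hvy
    rcases hw.eq_or_rel_of_reflTransGen ((reflTransGen_of_mem_cluster hu).tail huy) with rfl | hmy
    · exact mem_cluster_self _ _
    · exact hmax y hmy (sat_orDiaOfTypes_of_rType_eq hvy (hw.sat_orDiaOfTypes_of_mem_cluster hmΦ hv))
  · rintro _ ⟨u, hu, rfl⟩
    obtain ⟨u', hmu' | hmu', hu'u⟩ := hd.exists_rType_eq_of_sat_or_dia hρσ
      fun φ hφ => sat_or.1 (hmΦ _ ⟨u, hu, φ, hφ, rfl⟩)
    · exact ⟨u', hmu' ▸ mem_cluster_self _ _, hu'u⟩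
    · exact ⟨u', hmax u' hmu' (sat_orDiaOfTypes_of_rType_eq hu'u.symm (hw.sat_orDiaOfTypes hu)),
        hu'u⟩
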